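/- arXiv:math/0410305 — 2 statements merged into one kernel-verified Lean document; each statement's English description precedes it below -/
import Mathlib

section
/- Let K be a number field, O its ring of integers, and consider the groups P_O = O ⋊ O* and P_K = K ⋊ K* (the 'ax+b' groups, with O* and K* acting by multiplication). Then P_O is a Hecke subgroup of P_K: every double coset P_O γ P_O with γ ∈ P_K contains only finitely many right cosets of P_O. -/
open NumberField SemidirectProduct

/-- The action of the multiplicative group `Kˣ` on the additive group of `K`
(written multiplicatively), used to form the `ax+b` group `K ⋊ Kˣ`. -/
def mulActionAut (K : Type*) [Field K] : Kˣ →* MulAut (Multiplicative K) where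
  toFun x := AddEquiv.toMultiplicative (DistribMulAction.toAddAut Kˣ K x)
  map_one' := by ext a; simp
  map_mul' x y := by ext a; simp [mul_smul]

/-- The `ax+b` group `P_K = K ⋊ Kˣ` of a number field `K`. -/
abbrev PK (K : Type*) [Field K] := Multiplicative K ⋊[mulActionAut K] Kˣ

variable (K : Type*) [Field K] [NumberField K]

/-- The subgroup `P_O = 𝓞 K ⋊ (𝓞 K)ˣ` of `P_K`, consisting of the elements whose additive
part is an algebraic integer and whose multiplicative part is a unit of `𝓞 K`. -/
def PO : Subgroup (PK K) where
  carrier := {g | (g.left.toAdd ∈ Set.range (algebraMap (𝓞 K) K)) ∧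
      g.right ∈ (Units.map (algebraMap (𝓞 K) K).toMonoidHom).range}
  one_mem' := by
    constructor
    · exact ⟨0, by simp [SemidirectProduct.one_left]⟩
    · exact ⟨1, by simp⟩
  mul_mem' := by
    rintro a b ⟨⟨m, hm⟩, ⟨u, hu⟩⟩ ⟨⟨n, hn⟩, ⟨v, hv⟩⟩
    constructor
    · refine ⟨m + (u : 𝓞 K) * n, ?_⟩
      have h2 : (a * b).left.toAdd = a.left.toAdd + (a.right : K) * b.left.toAdd := rfl
      have hu' : ((a.right : Kˣ) : K) = algebraMap (𝓞 K) K (u : 𝓞 K) := by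
        rw [← hu]; rfl
      rw [h2, ← hm, ← hn, hu', map_add, map_mul]
    · exact ⟨u * v, by rw [map_mul, hu, hv, SemidirectProduct.mul_right]⟩
  inv_mem' := by
    rintro a ⟨⟨m, hm⟩, ⟨u, hu⟩⟩
    constructor
    · refine ⟨-(((u⁻¹ : (𝓞 K)ˣ) : 𝓞 K) * m), ?_⟩
      have h2 : (a⁻¹).left.toAdd = ((a.right⁻¹ : Kˣ) : K) * (-(a.left.toAdd)) := rfl
      have hu' : ((a.right⁻¹ : Kˣ) : K) =
          algebraMap (𝓞 K) K ((u⁻¹ : (𝓞 K)ˣ) : 𝓞 K) := by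
        rw [← hu, ← map_inv]; rfl
      rw [h2, ← hm, hu', map_neg, map_mul]
      ring
    · exact ⟨u⁻¹, by rw [map_inv, hu, SemidirectProduct.inv_right]⟩

/-!
A right coset `P_O γ h` with `h ∈ P_O` only depends on the class of `h` modulo
`P_O ∩ γ⁻¹ P_O γ`, so it suffices that this subgroup has finite index in `P_O`.
Writing `γ = (b, a)`, conjugation by `γ` sends `(n, v)` to `(a n + b (1 - v), v)`. Choose
`c ≠ 0` in `O` with `c a, c b ∈ O`: if `h, h' ∈ P_O` agree modulo `c` in both coordinates, then
`h⁻¹ h' = (n, v)` with `n ≡ 0` and `v ≡ 1 (mod c)`, and its conjugate lies in `P_O`.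
So the index is at most `|O / c O|²`.
-/
namespace Subgroup

variable {G : Type*} [Group G]

theorem rightCosetSet_eq_of_mul_inv_mem {H : Subgroup G} {g g' : G} (hg : g' * g⁻¹ ∈ H) :
    {x : G | ∃ h ∈ H, x = h * g} = {x : G | ∃ h ∈ H, x = h * g'} := by
  ext x
  constructor
  · rintro ⟨h, hh, rfl⟩
    exact ⟨h * (g' * g⁻¹)⁻¹, mul_mem hh (inv_mem hg), by group⟩
  · rintro ⟨h, hh, rfl⟩
    exact ⟨h * (g' * g⁻¹), mul_mem hh hg, by group⟩

theorem finiteIndex_of_surjective {α X : Type*} [Finite X] (L : Subgroup G) {e : α → G}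
    (he : Function.Surjective e) (π : α → X) (hπ : ∀ p q, π p = π q → (e p)⁻¹ * e q ∈ L) :
    L.FiniteIndex := by
  have : Finite (Quotient (Setoid.ker π)) := Finite.of_injective _ (Setoid.kerLift_injective π)
  let q : Quotient (Setoid.ker π) → G ⧸ L :=
    Quotient.map' e fun p p' hpp' => QuotientGroup.leftRel_apply.mpr (hπ p p' hpp')
  have hq : Function.Surjective q := by
    rintro ⟨g⟩
    obtain ⟨p, rfl⟩ := he g
    exact ⟨Quotient.mk'' p, rfl⟩
  have : Finite (G ⧸ L) := Finite.of_surjective q hq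
  exact finiteIndex_of_finite_quotient

/-- `H ∩ γ⁻¹ H γ`, as a subgroup of `H`. -/
def conjPreimage (H : Subgroup G) (γ : G) : Subgroup H :=
  H.comap ((MulAut.conj γ).toMonoidHom.comp H.subtype)

theorem finite_rightCosets_of_finiteIndex (H : Subgroup G) (γ : G)
    [(H.conjPreimage γ).FiniteIndex] :
    Set.Finite ((fun g => {x : G | ∃ h ∈ H, x = h * g}) ''
      {g : G | ∃ h₁ ∈ H, ∃ h₂ ∈ H, g = h₁ * γ * h₂}) := by
  let F : H ⧸ H.conjPreimage γ → Set G := Quotient.lift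
    (fun h : H => {x : G | ∃ h' ∈ H, x = h' * (γ * (h : G)⁻¹)})
    (fun h h' hhh' => Eq.symm <| rightCosetSet_eq_of_mul_inv_mem <| by
      have : γ * (h⁻¹ * h' : H) * γ⁻¹ ∈ H := QuotientGroup.leftRel_apply.mp hhh'
      simpa [mul_assoc] using this)
  refine (Set.finite_range F).subset ?_
  rintro _ ⟨_, ⟨h₁, hh₁, h₂, hh₂, rfl⟩, rfl⟩
  refine ⟨QuotientGroup.mk ⟨h₂, hh₂⟩⁻¹, (rightCosetSet_eq_of_mul_inv_mem ?_).symm⟩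
  simpa [mul_assoc] using hh₁

end Subgroup

namespace PK

variable {K : Type*} [Field K]

theorem toAdd_left_mul (g g' : PK K) :
    (g * g').left.toAdd = g.left.toAdd + g.right * g'.left.toAdd := rfl

theorem toAdd_left_inv (g : PK K) : g⁻¹.left.toAdd = -(g.right⁻¹ * g.left.toAdd) := by
  change ((g.right⁻¹ : Kˣ) : K) * (-g.left.toAdd) = _
  ring

theorem toAdd_left_conj_inv_mul (γ g g' : PK K) :
    (γ * (g⁻¹ * g') * γ⁻¹).left.toAdd = (g.right : K)⁻¹ *
      (γ.right * (g'.left.toAdd - g.left.toAdd) + γ.left.toAdd * (g.right - g'.right)) := by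
  simp only [toAdd_left_mul, toAdd_left_inv, mul_right, inv_right, Units.val_mul,
    Units.val_inv_eq_inv_val]
  field_simp
  ring

theorem right_conj (γ g : PK K) : (γ * g * γ⁻¹).right = g.right := by
  simp [mul_right, inv_right]

end PK

namespace PO

variable {K : Type*} [Field K]

def ofIntegers (m : 𝓞 K) (u : (𝓞 K)ˣ) : PK K :=
  ⟨Multiplicative.ofAdd (algebraMap (𝓞 K) K m), Units.map (algebraMap (𝓞 K) K).toMonoidHom u⟩

theorem ofIntegers_mem (m : 𝓞 K) (u : (𝓞 K)ˣ) : ofIntegers m u ∈ PO K :=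
  ⟨⟨m, rfl⟩, ⟨u, rfl⟩⟩

theorem exists_ofIntegers_eq {g : PK K} (hg : g ∈ PO K) : ∃ m u, ofIntegers m u = g := by
  obtain ⟨⟨m, hm⟩, ⟨u, hu⟩⟩ := hg
  exact ⟨m, u, SemidirectProduct.ext (by simp [ofIntegers, hm]) hu⟩

theorem conj_inv_mul_ofIntegers_mem {γ : PK K} {c α β : 𝓞 K}
    (hα : algebraMap (𝓞 K) K α = algebraMap (𝓞 K) K c * γ.right)
    (hβ : algebraMap (𝓞 K) K β = algebraMap (𝓞 K) K c * γ.left.toAdd)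
    {m m' : 𝓞 K} {u u' : (𝓞 K)ˣ} (hm : m' - m ∈ Ideal.span {c})
    (hu : (u' : 𝓞 K) - u ∈ Ideal.span {c}) :
    γ * ((ofIntegers m u)⁻¹ * ofIntegers m' u') * γ⁻¹ ∈ PO K := by
  obtain ⟨s, hs⟩ := Ideal.mem_span_singleton'.mp hm
  obtain ⟨t, ht⟩ := Ideal.mem_span_singleton'.mp hu
  constructor
  · refine ⟨↑u⁻¹ * (α * s - β * t), ?_⟩
    have hs' := congrArg (algebraMap (𝓞 K) K) hs
    have ht' := congrArg (algebraMap (𝓞 K) K) ht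
    simp only [map_mul, map_sub] at hs' ht'
    rw [PK.toAdd_left_conj_inv_mul]
    simp only [ofIntegers, map_mul, map_sub, map_units_inv, hα, hβ, toAdd_ofAdd, Units.coe_map,
      RingHom.toMonoidHom_eq_coe, MonoidHom.coe_coe]
    linear_combination (algebraMap (𝓞 K) K u)⁻¹ *
      (γ.right * hs' - γ.left.toAdd * ht')
  · refine ⟨u⁻¹ * u', ?_⟩
    rw [PK.right_conj]
    simp [ofIntegers]

theorem exists_mul_right_mem_and_mul_left_mem (γ : PK K) [IsFractionRing (𝓞 K) K] :
    ∃ c α β : 𝓞 K, c ≠ 0 ∧ algebraMap (𝓞 K) K α = algebraMap (𝓞 K) K c * γ.right ∧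
      algebraMap (𝓞 K) K β = algebraMap (𝓞 K) K c * γ.left.toAdd := by
  obtain ⟨c, hc⟩ := IsLocalization.exist_integer_multiples (nonZeroDivisors (𝓞 K)) Finset.univ
    ![(γ.right : K), γ.left.toAdd]
  obtain ⟨α, hα⟩ := hc 0 (Finset.mem_univ _)
  obtain ⟨β, hβ⟩ := hc 1 (Finset.mem_univ _)
  refine ⟨c, α, β, nonZeroDivisors.coe_ne_zero c, ?_, ?_⟩
  · simpa [Algebra.smul_def] using hα
  · simpa [Algebra.smul_def] using hβ

theorem finiteIndex_conjPreimage [NumberField K] (γ : PK K) :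
    ((PO K).conjPreimage γ).FiniteIndex := by
  obtain ⟨c, α, β, hc, hα, hβ⟩ := exists_mul_right_mem_and_mul_left_mem γ
  have : Finite (𝓞 K ⧸ Ideal.span {c}) :=
    Ideal.finiteQuotientOfFreeOfNeBot _ (by simpa [Ideal.span_singleton_eq_bot] using hc)
  refine Subgroup.finiteIndex_of_surjective _
    (e := fun p : 𝓞 K × (𝓞 K)ˣ => ⟨ofIntegers p.1 p.2, ofIntegers_mem p.1 p.2⟩) ?_
    (fun p => (Ideal.Quotient.mk (Ideal.span {c}) p.1, Ideal.Quotient.mk (Ideal.span {c}) p.2))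
    fun p q hpq => ?_
  · rintro ⟨g, hg⟩
    obtain ⟨m, u, rfl⟩ := exists_ofIntegers_eq hg
    exact ⟨(m, u), rfl⟩
  · obtain ⟨hm, hu⟩ := Prod.ext_iff.mp hpq
    exact conj_inv_mul_ofIntegers_mem hα hβ (Ideal.Quotient.eq.mp hm.symm)
      (Ideal.Quotient.eq.mp hu.symm)

end PO

/-- `(P_K, P_O)` is a Hecke pair: every double coset `P_O γ P_O` contains finitely many
right cosets of `P_O`. -/
theorem PO_hecke_in_PK (γ : PK K) :
    Set.Finite ((fun g => {x : PK K | ∃ h ∈ PO K, x = h * g}) ''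
      {g : PK K | ∃ h₁ ∈ PO K, ∃ h₂ ∈ PO K, g = h₁ * γ * h₂}) :=
  have := PO.finiteIndex_conjPreimage γ
  (PO K).finite_rightCosets_of_finiteIndex γ
end

section
/- Let K be a number field with ring of integers O. The quotient homomorphism K* → K*/O* admits a multiplicative (monoid-homomorphic) cross section s : K*/O* → K* which maps the sub-semigroup of classes of nonzero integers (i.e., principal integral ideals) into the nonzero integers O ∖ {0}. -/
/-!
Sending `x` to the exponents of the prime factorisation of `(x)` embeds `Kˣ ⧸ (𝓞 K)ˣ` into the
free abelian group on the height-one primes of `𝓞 K`. A submodule of a free module over a PID is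
projective: by Zorn's lemma there is a maximal partial section of the surjection, defined on the
elements supported on a set `S` of coordinates, and adding one coordinate `i ∉ S` enlarges that
submodule by a quotient isomorphic (via the `i`-th coordinate) to an ideal, which is free, so the
section extends. Hence `Kˣ → Kˣ ⧸ (𝓞 K)ˣ` splits multiplicatively, and any section `s` satisfies
`s x̄ ∈ x (𝓞 K)ˣ`, so it maps integers to integers.
-/

open Function NumberField IsDedekindDomain FractionalIdeal
open scoped nonZeroDivisors

section Extension
variable {R M A : Type*} [Ring R] [AddCommGroup M] [Module R M] [AddCommGroup A] [Module R A]
  {π : A →ₗ[R] M}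

theorem LinearPMap.exists_extension_of_projective_quotient (hπ : Surjective π)
    {g : M →ₗ.[R] A} (hg : ∀ x, π (g x) = x) {P : Submodule R M} (hle : g.domain ≤ P)
    [Module.Projective R (P ⧸ g.domain.comap P.subtype)] :
    ∃ g' : M →ₗ.[R] A, g ≤ g' ∧ g'.domain = P ∧ ∀ x, π (g' x) = x := by
  set N := g.domain.comap P.subtype
  obtain ⟨t, ht⟩ := N.mkQ.exists_rightInverse_of_surjective N.range_mkQ
  obtain ⟨ℓ, hℓ⟩ := Module.projective_lifting_property π (P.subtype ∘ₗ t) hπ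
  have hmem : ∀ p : P, P.subtype (p - t (N.mkQ p)) ∈ g.domain := fun p => by
    rw [← Submodule.mem_comap, ← Submodule.Quotient.mk_eq_zero, Submodule.Quotient.mk_sub,
      sub_eq_zero]
    exact (LinearMap.congr_fun ht (N.mkQ p)).symm
  -- on `P = N ⊕ t (P ⧸ N)`, extend `g` by the lift `ℓ` on the second summand
  let r : P →ₗ[R] g.domain :=
    (P.subtype ∘ₗ (LinearMap.id - t ∘ₗ N.mkQ)).codRestrict g.domain fun p => hmem p
  have hr : ∀ p, (r p : M) = p - t (N.mkQ p) := fun p => rfl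
  refine ⟨⟨P, g.toFun ∘ₗ r + ℓ ∘ₗ N.mkQ⟩, ⟨hle, fun x y hxy => ?_⟩, rfl, fun p => ?_⟩
  · have hy : N.mkQ y = 0 := (Submodule.Quotient.mk_eq_zero N).2 (by simp [N, ← hxy])
    have hry : r y = x := Subtype.ext (by simp [hr, hy, hxy])
    simp [hry, hy]
  · calc π (g (r p) + ℓ (N.mkQ p)) = (p - t (N.mkQ p)) + t (N.mkQ p) := by
          rw [π.map_add, hg, ← LinearMap.comp_apply π ℓ, hℓ, hr]; rfl
      _ = p := sub_add_cancel _ _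
end Extension

section FreeSubmodule
variable {R ι M : Type*} [Ring R] [AddCommGroup M] [Module R M]

noncomputable def supportedComap (f : M →ₗ[R] ι →₀ R) (S : Set ι) : Submodule R M :=
  (Finsupp.supported R R S).comap f

theorem mem_supportedComap {f : M →ₗ[R] ι →₀ R} {S : Set ι} {x : M} :
    x ∈ supportedComap f S ↔ ↑(f x).support ⊆ S :=
  Finsupp.mem_supported R (f x)

theorem supportedComap_mono (f : M →ₗ[R] ι →₀ R) {S T : Set ι} (h : S ⊆ T) :
    supportedComap f S ≤ supportedComap f T :=
  Submodule.comap_mono (Finsupp.supported_mono h)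

variable {A : Type*} [AddCommGroup A] [Module R A]

def supportedSections (f : M →ₗ[R] ι →₀ R) (π : A →ₗ[R] M) : Set (Set ι × (M →ₗ.[R] A)) :=
  {p | p.2.domain = supportedComap f p.1 ∧ ∀ x, π (p.2 x) = x}

theorem exists_upperBound_supportedSections {f : M →ₗ[R] ι →₀ R} {π : A →ₗ[R] M}
    {c : Set (Set ι × (M →ₗ.[R] A))} (hcs : c ⊆ supportedSections f π)
    (hc : IsChain (· ≤ ·) c) (hne : c.Nonempty) :
    ∃ ub ∈ supportedSections f π, ∀ p ∈ c, p ≤ ub := by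
  have hdir : DirectedOn (· ≤ ·) (Prod.snd '' c) :=
    directedOn_image.2 (hc.directedOn.mono fun _ _ h => h.2)
  have hdirS : DirectedOn (fun p q => p.1 ⊆ q.1) c := hc.directedOn.mono fun _ _ h => h.1
  have hdom : ∀ x, x ∈ (LinearPMap.sSup _ hdir).domain ↔ ∃ p ∈ c, x ∈ p.2.domain := fun x => by
    rw [LinearPMap.mem_domain_sSup_iff (hne.image _) hdir, Set.exists_mem_image]
  refine ⟨(⋃ p ∈ c, p.1, LinearPMap.sSup _ hdir), ⟨?_, fun x => ?_⟩, fun p hp =>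
    ⟨Set.subset_biUnion_of_mem hp, LinearPMap.le_sSup hdir (Set.mem_image_of_mem _ hp)⟩⟩
  · ext x
    rw [hdom, mem_supportedComap]
    constructor
    · rintro ⟨p, hp, hx⟩
      rw [(hcs hp).1, mem_supportedComap] at hx
      exact hx.trans (Set.subset_biUnion_of_mem hp)
    · intro hx
      obtain ⟨p, hp, hsub⟩ := hdirS.exists_mem_subset_of_finset_subset_biUnion hne hx
      exact ⟨p, hp, (hcs hp).1 ▸ mem_supportedComap.2 hsub⟩
  · obtain ⟨p, hp, hx⟩ := (hdom x).1 x.2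
    rw [show LinearPMap.sSup _ hdir x = p.2 ⟨x, hx⟩ from
      LinearPMap.sSup_apply hdir (Set.mem_image_of_mem _ hp) ⟨x, hx⟩, (hcs hp).2]

end FreeSubmodule

section PID
variable {R ι M : Type*} [CommRing R] [IsDomain R] [IsPrincipalIdealRing R]
  [AddCommGroup M] [Module R M]

theorem projective_quotient_supportedComap_insert (f : M →ₗ[R] ι →₀ R) {i : ι} {S : Set ι}
    (hi : i ∉ S) :
    Module.Projective R (supportedComap f (insert i S) ⧸
      (supportedComap f S).comap (supportedComap f (insert i S)).subtype) := by
  set P := supportedComap f (insert i S)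
  let φ : P →ₗ[R] R := Finsupp.lapply i ∘ₗ f ∘ₗ P.subtype
  have hker : (supportedComap f S).comap P.subtype = LinearMap.ker φ := by
    ext ⟨x, hx⟩
    rw [mem_supportedComap] at hx
    simp only [Submodule.mem_comap, Submodule.subtype_apply, mem_supportedComap,
      LinearMap.mem_ker, φ, LinearMap.comp_apply, Finsupp.lapply_apply]
    constructor
    · intro hS
      exact Finsupp.notMem_support_iff.1 fun h => hi (hS h)
    · intro h0 j hj
      exact (hx hj).resolve_left fun hji => Finsupp.mem_support_iff.1 hj (hji ▸ h0)
  -- `P ⧸ (supportedComap f S)` is isomorphic to an ideal of `R` via the `i`-th coordinate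
  exact .of_equiv ((Submodule.quotEquivOfEq _ _ hker).trans φ.quotKerEquivRange).symm

theorem Module.Projective.of_injective_finsupp (f : M →ₗ[R] ι →₀ R)
    (hf : Function.Injective f) :
    Module.Projective R M := by
  refine .of_lifting_property'' fun π hπ => ?_
  have hbot : (∅, ⊥) ∈ supportedSections f π := by
    refine ⟨?_, fun x => ?_⟩
    · rw [supportedComap, Finsupp.supported_empty, Submodule.comap_bot, LinearMap.ker_eq_bot.2 hf]
      rfl
    · change π 0 = x
      rw [map_zero, (Submodule.mem_bot R).1 x.2]
  obtain ⟨⟨S, g⟩, -, hmax⟩ := zorn_le_nonempty₀ _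
    (fun c hcs hc y hy => exists_upperBound_supportedSections hcs hc ⟨y, hy⟩) _ hbot
  obtain ⟨hdom, hsec⟩ : g.domain = supportedComap f S ∧ ∀ x, π (g x) = x := hmax.prop
  have hS : S = Set.univ := by
    refine Set.eq_univ_of_forall fun i => by_contra fun hi => ?_
    have : Module.Projective R (supportedComap f (insert i S) ⧸
        g.domain.comap (supportedComap f (insert i S)).subtype) := by
      rw [hdom]
      exact projective_quotient_supportedComap_insert f hi
    obtain ⟨g', hgg', hdom', hsec'⟩ := LinearPMap.exists_extension_of_projective_quotient hπ hsec
      (hdom ▸ supportedComap_mono f (Set.subset_insert i S))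
    have hle := hmax.2 (y := (insert i S, g')) ⟨hdom', hsec'⟩ ⟨Set.subset_insert i S, hgg'⟩
    exact hi (hle.1 (Set.mem_insert i S))
  have htop : g.domain = ⊤ := by
    rw [hdom, hS, supportedComap, Finsupp.supported_univ, Submodule.comap_top]
  exact ⟨g.toFun ∘ₗ LinearMap.id.codRestrict g.domain fun x => htop ▸ Submodule.mem_top,
    LinearMap.ext fun x => hsec _⟩

end PID

theorem MonoidHom.exists_rightInverse_of_injective_finsupp {ι H G : Type*} [CommGroup H]
    [CommGroup G] {π : H →* G} (hπ : Surjective π) {f : G →* Multiplicative (ι →₀ ℤ)}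
    (hf : Injective f) : ∃ s : G →* H, π.comp s = .id G := by
  have := Module.Projective.of_injective_finsupp (toAdditiveLeft f).toIntLinearMap
    (Multiplicative.toAdd.injective.comp (hf.comp Additive.toMul.injective))
  obtain ⟨s, hs⟩ := (toAdditive π).toIntLinearMap.exists_rightInverse_of_surjective
    (LinearMap.range_eq_top.2 hπ)
  exact ⟨toAdditive.symm s.toAddMonoidHom,
    ext fun g => congrArg Additive.toMul (LinearMap.congr_fun hs (.ofMul g))⟩

theorem ker_toPrincipalIdeal {R K : Type*} [CommRing R] [IsDomain R] [Field K] [Algebra R K]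
    [IsFractionRing R K] :
    (toPrincipalIdeal R K).ker = (Units.map (algebraMap R K).toMonoidHom).range := by
  ext x
  rw [MonoidHom.mem_ker, toPrincipalIdeal_eq_iff, Units.val_one, ← spanSingleton_one,
    eq_comm, spanSingleton_eq_spanSingleton]
  constructor
  · rintro ⟨u, hu⟩
    exact ⟨u, Units.ext (by simpa [Units.smul_def, Algebra.smul_def] using hu)⟩
  · rintro ⟨u, rfl⟩
    exact ⟨u, by simp [Units.smul_def, Algebra.smul_def]⟩

section Dedekind
variable {R K : Type*} [CommRing R] [IsDedekindDomain R] [Field K] [Algebra R K]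
  [IsFractionRing R K]

variable (R K) in
noncomputable def FractionalIdeal.countHom :
    (FractionalIdeal R⁰ K)ˣ →* Multiplicative (HeightOneSpectrum R →₀ ℤ) where
  toFun I := .ofAdd <| Finsupp.ofSupportFinite (fun v => count K v I)
    (Filter.eventually_cofinite.1 (finite_factors (I : FractionalIdeal R⁰ K)))
  map_one' := by
    ext v
    exact count_one K v
  map_mul' I J := by
    ext v
    exact count_mul K v I.ne_zero J.ne_zero

theorem FractionalIdeal.countHom_injective : Injective (countHom R K) := by
  refine (injective_iff_map_eq_one _).2 fun I hI => Units.ext ?_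
  have hcount : ∀ v, count K v (I : FractionalIdeal R⁰ K) = 0 := fun v =>
    DFunLike.congr_fun (congrArg Multiplicative.toAdd hI) v
  rw [Units.val_one, ← finprod_heightOneSpectrum_factorization' K I.ne_zero]
  simp [hcount]

theorem exists_injective_quotient_units_finsupp :
    ∃ f : Kˣ ⧸ (Units.map (algebraMap R K).toMonoidHom).range →*
      Multiplicative (HeightOneSpectrum R →₀ ℤ), Injective f := by
  set N := (Units.map (algebraMap R K).toMonoidHom).range
  have hker : N = ((countHom R K).comp (toPrincipalIdeal R K)).ker := by
    rw [MonoidHom.ker_comp_of_injective _ _ countHom_injective, ker_toPrincipalIdeal]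
  exact ⟨_, (QuotientGroup.injective_lift_iff N _ hker.le).2 hker⟩

end Dedekind

theorem mem_range_algebraMap_of_mk_eq {R K : Type*} [CommRing R] [CommRing K] [Algebra R K]
    {x y : Kˣ} (h : (x : Kˣ ⧸ (Units.map (algebraMap R K).toMonoidHom).range) = y)
    (hx : (x : K) ∈ Set.range (algebraMap R K)) : (y : K) ∈ Set.range (algebraMap R K) := by
  obtain ⟨u, hu⟩ := QuotientGroup.eq.1 h
  obtain ⟨a, ha⟩ := hx
  refine ⟨a * u, ?_⟩
  rw [map_mul, ha, ← mul_inv_cancel_left x y, ← hu]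
  rfl

/-- The quotient map `Kˣ → Kˣ/𝓞 Kˣ` admits a multiplicative cross section which maps the
classes of nonzero algebraic integers (i.e. nonzero principal integral ideals) back into
the algebraic integers. -/
theorem exists_multiplicative_cross_section
    (K : Type*) [Field K] [NumberField K] :
    haveI : ((Units.map (algebraMap (𝓞 K) K).toMonoidHom).range).Normal :=
      Subgroup.normal_of_comm _
    ∃ s : (Kˣ ⧸ (Units.map (algebraMap (𝓞 K) K).toMonoidHom).range) →* Kˣ,
      ((QuotientGroup.mk' (Units.map (algebraMap (𝓞 K) K).toMonoidHom).range).comp s =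
        MonoidHom.id _) ∧
      ∀ x : Kˣ, ((x : K) ∈ Set.range (algebraMap (𝓞 K) K)) →
        ((s (QuotientGroup.mk x) : Kˣ) : K) ∈ Set.range (algebraMap (𝓞 K) K) := by
  set N := (Units.map (algebraMap (𝓞 K) K).toMonoidHom).range
  obtain ⟨f, hf⟩ := exists_injective_quotient_units_finsupp (R := 𝓞 K) (K := K)
  obtain ⟨s, hs⟩ := MonoidHom.exists_rightInverse_of_injective_finsupp (G := Kˣ ⧸ N)
    (QuotientGroup.mk'_surjective N) hf
  exact ⟨s, hs, fun x =>
    mem_range_algebraMap_of_mk_eq (DFunLike.congr_fun hs (QuotientGroup.mk x)).symm⟩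
end
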